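/- The unique fixed point: if σ_s < σ_t, there exists a unique continuous Ψ on [0,L] satisfying Ψ(s) = (1/2)∫_{-1}^{1} I_μ[Ψ](s) dμ where, for each μ > 0, I_μ[Ψ] is the MoC solution with input Ψ; uniqueness follows from the Banach fixed point theorem applied to the contraction with constant σ_s/σ_t. -/

import Mathlib

open Real Set

/-- The Method of Characteristics angular flux with input average flux `Ψ`,
boundary value `Ibd` and source `q`, at position `x` in direction `μ`. -/
noncomputable def Imoc (σt σs a b Ibd : ℝ) (q : ℝ → ℝ) (Ψ : ℝ → ℝ) (x μ : ℝ) : ℝ :=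
  let x0 : ℝ := if 0 < μ then a else b
  let s : ℝ := (x - x0) / μ
  Ibd * Real.exp (-σt * s)
    + ∫ s' in (0:ℝ)..s, (σs * Ψ (x0 + s' * μ) + q (x0 + s' * μ)) * Real.exp (-σt * (s - s'))

/-!
Along a characteristic, two inputs `Ψ₁, Ψ₂` produce angular fluxes differing by
`∫₀ˢ σ_s (Ψ₁ - Ψ₂) e^{-σ_t (s - s')} ds'`, which is at most `σ_s ‖Ψ₁ - Ψ₂‖ / σ_t` since the
attenuation kernel has total mass `≤ 1 / σ_t`; averaging over `μ ∈ [-1, 1]` keeps this bound. So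
`Ψ ↦ T Ψ` is a `σ_s / σ_t`-contraction of `C([a, b])` and the Banach fixed point theorem applies.
Measurability in `μ` and continuity in `x` come from the joint continuity of the characteristic
solution in (inflow point, direction, path length).
-/

open MeasureTheory

noncomputable section

def charFlux (σt Ibd : ℝ) (H : ℝ → ℝ) (x₀ μ s : ℝ) : ℝ :=
  Ibd * exp (-σt * s) + ∫ s' in (0:ℝ)..s, H (x₀ + s' * μ) * exp (-σt * (s - s'))

def inflowPoint (a b μ : ℝ) : ℝ := if 0 < μ then a else b

-- At `μ = 0` division by zero makes this `0`; a single direction does not affect the μ-integral.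
def pathLength (a b x μ : ℝ) : ℝ := (x - inflowPoint a b μ) / μ

def angularFlux (σt Ibd a b : ℝ) (H : ℝ → ℝ) (x μ : ℝ) : ℝ :=
  charFlux σt Ibd H (inflowPoint a b μ) μ (pathLength a b x μ)

def scalarFlux (σt Ibd a b : ℝ) (H : ℝ → ℝ) (x : ℝ) : ℝ :=
  (1/2 : ℝ) * ∫ μ in (-1:ℝ)..1, angularFlux σt Ibd a b H x μ

end

section CharFlux

variable {σt : ℝ}

theorem integral_exp_neg_mul_sub (hσt : σt ≠ 0) (s : ℝ) :
    ∫ s' in (0:ℝ)..s, exp (-σt * (s - s')) = (1 - exp (-σt * s)) / σt := by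
  have hderiv : ∀ s' ∈ uIcc 0 s,
      HasDerivAt (fun s' => exp (-σt * (s - s')) / σt) (exp (-σt * (s - s'))) s' := by
    intro s' _
    refine ((((hasDerivAt_id s').const_sub s).const_mul (-σt)).exp.div_const σt).congr_deriv ?_
    field_simp
    simp
  rw [intervalIntegral.integral_eq_sub_of_hasDerivAt hderiv
    (Continuous.intervalIntegrable (by fun_prop) _ _)]
  simp only [sub_self, mul_zero, exp_zero, sub_zero]
  ring

theorem abs_integral_mul_exp_neg_le (hσt : 0 < σt) {g : ℝ → ℝ} {C s : ℝ} (hs : 0 ≤ s)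
    (hg : ∀ t ∈ Icc 0 s, |g t| ≤ C) :
    |∫ s' in (0:ℝ)..s, g s' * exp (-σt * (s - s'))| ≤ C / σt := by
  have hC : 0 ≤ C := (abs_nonneg _).trans (hg 0 ⟨le_rfl, hs⟩)
  have hexp : Continuous fun s' => exp (-σt * (s - s')) := by fun_prop
  calc |∫ s' in (0:ℝ)..s, g s' * exp (-σt * (s - s'))|
      ≤ ∫ s' in (0:ℝ)..s, C * exp (-σt * (s - s')) := by
        rw [← norm_eq_abs]
        refine intervalIntegral.norm_integral_le_of_norm_le hs (ae_of_all _ fun t ht => ?_)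
          ((continuous_const.mul hexp).intervalIntegrable _ _)
        rw [norm_mul, norm_of_nonneg (exp_nonneg _)]
        exact mul_le_mul_of_nonneg_right (hg t (Ioc_subset_Icc_self ht)) (exp_nonneg _)
    _ = C * (1 - exp (-σt * s)) / σt := by
        rw [intervalIntegral.integral_const_mul, integral_exp_neg_mul_sub hσt.ne', mul_div_assoc]
    _ ≤ C / σt := by
        gcongr
        nlinarith [exp_pos (-σt * s)]

variable {Ibd x₀ μ s C : ℝ} {H H₁ H₂ : ℝ → ℝ}

theorem continuous_charFlux (hH : Continuous H) :
    Continuous fun p : ℝ × ℝ × ℝ => charFlux σt Ibd H p.1 p.2.1 p.2.2 := by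
  unfold charFlux
  refine Continuous.add (by fun_prop) ?_
  exact intervalIntegral.continuous_parametric_intervalIntegral_of_continuous
    (f := fun (p : ℝ × ℝ × ℝ) s' => H (p.1 + s' * p.2.1) * exp (-σt * (p.2.2 - s')))
    (by fun_prop) (s := fun p => p.2.2) (by fun_prop)

theorem abs_charFlux_le (hσt : 0 < σt) (hs : 0 ≤ s)
    (hH : ∀ t ∈ Icc 0 s, |H (x₀ + t * μ)| ≤ C) :
    |charFlux σt Ibd H x₀ μ s| ≤ |Ibd| + C / σt := by
  refine (abs_add_le _ _).trans (add_le_add ?_ (abs_integral_mul_exp_neg_le hσt hs hH))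
  rw [abs_mul, abs_of_pos (exp_pos _)]
  exact mul_le_of_le_one_right (abs_nonneg _) (exp_le_one_iff.2 (by nlinarith))

theorem charFlux_sub (hH₁ : Continuous H₁) (hH₂ : Continuous H₂) :
    charFlux σt Ibd H₁ x₀ μ s - charFlux σt Ibd H₂ x₀ μ s = charFlux σt 0 (H₁ - H₂) x₀ μ s := by
  have hint : ∀ H : ℝ → ℝ, Continuous H →
      IntervalIntegrable (fun s' => H (x₀ + s' * μ) * exp (-σt * (s - s'))) volume 0 s :=
    fun H hH => Continuous.intervalIntegrable (by fun_prop) _ _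
  simp only [charFlux, Pi.sub_apply, sub_mul, zero_mul, zero_add,
    intervalIntegral.integral_sub (hint H₁ hH₁) (hint H₂ hH₂)]
  ring

theorem charFlux_congr (h : ∀ t ∈ uIcc 0 s, H₁ (x₀ + t * μ) = H₂ (x₀ + t * μ)) :
    charFlux σt Ibd H₁ x₀ μ s = charFlux σt Ibd H₂ x₀ μ s := by
  unfold charFlux
  congr 1
  exact intervalIntegral.integral_congr fun t ht => by simp only [h t ht]

end CharFlux

section Geometry

variable {a b x μ : ℝ}

theorem pathLength_nonneg (hx : x ∈ Icc a b) : 0 ≤ pathLength a b x μ := by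
  unfold pathLength inflowPoint
  split_ifs with hμ
  · exact div_nonneg (sub_nonneg.2 hx.1) hμ.le
  · exact div_nonneg_of_nonpos (sub_nonpos.2 hx.2) (not_lt.1 hμ)

theorem inflowPoint_add_mul_mem (hab : a ≤ b) (hx : x ∈ Icc a b) {t : ℝ}
    (ht : t ∈ Icc 0 (pathLength a b x μ)) : inflowPoint a b μ + t * μ ∈ Icc a b := by
  unfold pathLength inflowPoint at *
  rcases lt_trichotomy μ 0 with hμ | rfl | hμ
  · simp only [if_neg hμ.not_gt] at ht ⊢
    have : (x - b) / μ * μ ≤ t * μ := mul_le_mul_of_nonpos_right ht.2 hμ.le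
    rw [div_mul_cancel₀ _ hμ.ne] at this
    constructor <;> nlinarith [ht.1, hx.1]
  · simpa using right_mem_Icc.2 hab
  · simp only [if_pos hμ] at ht ⊢
    have : t * μ ≤ (x - a) / μ * μ := mul_le_mul_of_nonneg_right ht.2 hμ.le
    rw [div_mul_cancel₀ _ hμ.ne'] at this
    constructor <;> nlinarith [ht.1, hx.2]

end Geometry

section AngularFlux

variable {σt Ibd a b x μ C : ℝ} {H H₁ H₂ : ℝ → ℝ}

theorem measurable_angularFlux (hH : Continuous H) (x : ℝ) :
    Measurable (angularFlux σt Ibd a b H x) := by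
  have hF := (continuous_charFlux (σt := σt) (Ibd := Ibd) hH).measurable
  have hsplit : angularFlux σt Ibd a b H x = fun μ => if 0 < μ
      then charFlux σt Ibd H a μ ((x - a) / μ) else charFlux σt Ibd H b μ ((x - b) / μ) := by
    funext μ
    unfold angularFlux pathLength inflowPoint
    split_ifs <;> rfl
  rw [hsplit]
  exact Measurable.ite measurableSet_Ioi
    (hF.comp (f := fun μ => (a, μ, (x - a) / μ)) (by fun_prop))
    (hF.comp (f := fun μ => (b, μ, (x - b) / μ)) (by fun_prop))

theorem continuous_angularFlux (hH : Continuous H) (μ : ℝ) :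
    Continuous fun x => angularFlux σt Ibd a b H x μ :=
  (continuous_charFlux hH).comp (f := fun x => (inflowPoint a b μ, μ, pathLength a b x μ))
    (by unfold pathLength; fun_prop)

theorem abs_angularFlux_le (hσt : 0 < σt) (hab : a ≤ b) (hC : ∀ y ∈ Icc a b, |H y| ≤ C)
    (hx : x ∈ Icc a b) (μ : ℝ) : |angularFlux σt Ibd a b H x μ| ≤ |Ibd| + C / σt :=
  abs_charFlux_le hσt (pathLength_nonneg hx) fun _ ht => hC _ (inflowPoint_add_mul_mem hab hx ht)

theorem angularFlux_sub (hH₁ : Continuous H₁) (hH₂ : Continuous H₂) :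
    angularFlux σt Ibd a b H₁ x μ - angularFlux σt Ibd a b H₂ x μ
      = angularFlux σt 0 a b (H₁ - H₂) x μ :=
  charFlux_sub hH₁ hH₂

theorem angularFlux_congr (hab : a ≤ b) (h : EqOn H₁ H₂ (Icc a b)) (hx : x ∈ Icc a b) :
    angularFlux σt Ibd a b H₁ x μ = angularFlux σt Ibd a b H₂ x μ := by
  refine charFlux_congr fun t ht => h (inflowPoint_add_mul_mem hab hx ?_)
  rwa [uIcc_of_le (pathLength_nonneg hx)] at ht

end AngularFlux

section ScalarFlux

variable {σt Ibd a b x C : ℝ} {H H₁ H₂ : ℝ → ℝ}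

theorem intervalIntegrable_angularFlux (hσt : 0 < σt) (hab : a ≤ b) (hH : Continuous H)
    (hx : x ∈ Icc a b) : IntervalIntegrable (angularFlux σt Ibd a b H x) volume (-1) 1 := by
  obtain ⟨C, hC⟩ := isCompact_Icc.exists_bound_of_continuousOn hH.continuousOn
  exact intervalIntegrable_const.mono_fun' (measurable_angularFlux hH x).aestronglyMeasurable
    (ae_of_all _ fun μ => abs_angularFlux_le (Ibd := Ibd) hσt hab hC hx μ)

theorem continuousOn_scalarFlux (hσt : 0 < σt) (hab : a ≤ b) (hH : Continuous H) :
    ContinuousOn (scalarFlux σt Ibd a b H) (Icc a b) := by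
  obtain ⟨C, hC⟩ := isCompact_Icc.exists_bound_of_continuousOn hH.continuousOn
  rw [continuousOn_iff_continuous_domRestrict]
  refine continuous_const.mul (intervalIntegral.continuous_of_dominated_interval
    (fun z => (measurable_angularFlux hH z).aestronglyMeasurable)
    (fun z => ae_of_all _ fun μ _ => abs_angularFlux_le hσt hab hC z.2 μ)
    intervalIntegrable_const
    (ae_of_all _ fun μ _ => (continuous_angularFlux hH μ).comp continuous_subtype_val))

theorem abs_scalarFlux_le (hσt : 0 < σt) (hab : a ≤ b) (hC : ∀ y ∈ Icc a b, |H y| ≤ C)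
    (hx : x ∈ Icc a b) : |scalarFlux σt Ibd a b H x| ≤ |Ibd| + C / σt := by
  have h : ‖∫ μ in (-1:ℝ)..1, angularFlux σt Ibd a b H x μ‖ ≤ (|Ibd| + C / σt) * |1 - (-1)| :=
    intervalIntegral.norm_integral_le_of_norm_le_const fun μ _ => abs_angularFlux_le hσt hab hC hx μ
  rw [scalarFlux, abs_mul]
  norm_num at h ⊢
  linarith

theorem scalarFlux_sub (hσt : 0 < σt) (hab : a ≤ b) (hH₁ : Continuous H₁)
    (hH₂ : Continuous H₂) (hx : x ∈ Icc a b) :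
    scalarFlux σt Ibd a b H₁ x - scalarFlux σt Ibd a b H₂ x = scalarFlux σt 0 a b (H₁ - H₂) x := by
  simp only [scalarFlux, ← mul_sub, ← intervalIntegral.integral_sub
    (intervalIntegrable_angularFlux hσt hab hH₁ hx) (intervalIntegrable_angularFlux hσt hab hH₂ hx),
    angularFlux_sub hH₁ hH₂]

theorem abs_scalarFlux_sub_le (hσt : 0 < σt) (hab : a ≤ b) (hH₁ : Continuous H₁)
    (hH₂ : Continuous H₂) {d : ℝ} (hd : ∀ y ∈ Icc a b, |H₁ y - H₂ y| ≤ d) (hx : x ∈ Icc a b) :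
    |scalarFlux σt Ibd a b H₁ x - scalarFlux σt Ibd a b H₂ x| ≤ d / σt := by
  rw [scalarFlux_sub hσt hab hH₁ hH₂ hx]
  simpa using abs_scalarFlux_le (Ibd := 0) (H := H₁ - H₂) hσt hab hd hx

theorem scalarFlux_congr (hab : a ≤ b) (h : EqOn H₁ H₂ (Icc a b)) (hx : x ∈ Icc a b) :
    scalarFlux σt Ibd a b H₁ x = scalarFlux σt Ibd a b H₂ x := by
  unfold scalarFlux
  congr 1
  exact intervalIntegral.integral_congr fun μ _ => angularFlux_congr hab h hx

end ScalarFlux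

section SourceIteration

variable {σt σs Ibd a b : ℝ}

-- Sources given on `[a, b]` are extended constantly outside; characteristics through points of
-- `[a, b]` stay in `[a, b]` (`inflowPoint_add_mul_mem`), so the extension does not matter there.
noncomputable def sourceIteration (hσt : 0 < σt) (hab : a ≤ b) (σs Ibd : ℝ)
    (q Φ : C(Icc a b, ℝ)) : C(Icc a b, ℝ) :=
  ⟨(Icc a b).domRestrict (scalarFlux σt Ibd a b (IccExtend hab (σs • Φ + q))),
    (continuousOn_scalarFlux hσt hab (σs • Φ + q).continuous.Icc_extend').domRestrict⟩

theorem dist_sourceIteration_le (hσt : 0 < σt) (hσs : 0 ≤ σs) (hab : a ≤ b)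
    (q Φ₁ Φ₂ : C(Icc a b, ℝ)) :
    dist (sourceIteration hσt hab σs Ibd q Φ₁) (sourceIteration hσt hab σs Ibd q Φ₂)
      ≤ σs / σt * dist Φ₁ Φ₂ := by
  refine (ContinuousMap.dist_le (by positivity)).2 fun z => ?_
  rw [dist_eq_norm_sub, norm_eq_abs, div_mul_eq_mul_div]
  refine abs_scalarFlux_sub_le hσt hab (σs • Φ₁ + q).continuous.Icc_extend'
    (σs • Φ₂ + q).continuous.Icc_extend' (fun y hy => ?_) z.2
  simp only [IccExtend_of_mem hab _ hy, ContinuousMap.add_apply, ContinuousMap.smul_apply,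
    smul_eq_mul, add_sub_add_right_eq_sub, ← mul_sub, abs_mul, abs_of_nonneg hσs]
  rw [← Real.dist_eq]
  exact mul_le_mul_of_nonneg_left (ContinuousMap.dist_apply_le_dist _) hσs

theorem contractingWith_sourceIteration (hσt : 0 < σt) (hσs : 0 ≤ σs) (hcontr : σs < σt)
    (hab : a ≤ b) (q : C(Icc a b, ℝ)) :
    ContractingWith (σs / σt).toNNReal (sourceIteration hσt hab σs Ibd q) :=
  ⟨Real.toNNReal_lt_one.2 ((div_lt_one hσt).2 hcontr),
    LipschitzWith.of_dist_le' (dist_sourceIteration_le hσt hσs hab q)⟩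

theorem isFixedPt_sourceIteration_iff (hσt : 0 < σt) (hab : a ≤ b) {q Ψ : ℝ → ℝ}
    (hq : ContinuousOn q (Icc a b)) (hΨ : ContinuousOn Ψ (Icc a b)) :
    Function.IsFixedPt (sourceIteration hσt hab σs Ibd ⟨_, hq.domRestrict⟩)
        ⟨_, hΨ.domRestrict⟩ ↔
      ∀ x ∈ Icc a b, Ψ x = (1/2 : ℝ) * ∫ μ in (-1:ℝ)..1, Imoc σt σs a b Ibd q Ψ x μ := by
  simp only [Function.IsFixedPt, ContinuousMap.ext_iff, Subtype.forall]
  refine forall₂_congr fun x hx => ?_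
  change scalarFlux σt Ibd a b _ x = Ψ x ↔ Ψ x = scalarFlux σt Ibd a b (fun y => σs * Ψ y + q y) x
  rw [eq_comm, scalarFlux_congr hab (fun y hy => ?_) hx]
  simp [IccExtend_of_mem hab _ hy]

end SourceIteration

theorem stmt8 (σt σs a b Ibd : ℝ) (hσt : 0 < σt) (hσs : 0 ≤ σs) (hcontr : σs < σt)
    (hab : a ≤ b) (q : ℝ → ℝ) (hq : ContinuousOn q (Icc a b)) :
    ∃ Ψ : ℝ → ℝ, (ContinuousOn Ψ (Icc a b) ∧
        ∀ x ∈ Icc a b, Ψ x = (1/2 : ℝ) * ∫ μ in (-1:ℝ)..1, Imoc σt σs a b Ibd q Ψ x μ) ∧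
      ∀ Ψ' : ℝ → ℝ, (ContinuousOn Ψ' (Icc a b) ∧
        ∀ x ∈ Icc a b, Ψ' x = (1/2 : ℝ) * ∫ μ in (-1:ℝ)..1, Imoc σt σs a b Ibd q Ψ' x μ) →
      ∀ x ∈ Icc a b, Ψ' x = Ψ x := by
  have hT := contractingWith_sourceIteration (Ibd := Ibd) hσt hσs hcontr hab ⟨_, hq.domRestrict⟩
  set Φ := ContractingWith.fixedPoint _ hT
  have hΨ : ContinuousOn (IccExtend hab Φ) (Icc a b) := Φ.continuous.Icc_extend'.continuousOn
  have hΦ : (⟨_, hΨ.domRestrict⟩ : C(Icc a b, ℝ)) = Φ := by ext z; exact IccExtend_val hab Φ z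
  refine ⟨IccExtend hab Φ, ⟨hΨ, ?_⟩, fun Ψ' ⟨hΨ', hfix'⟩ x hx => ?_⟩
  · rw [← isFixedPt_sourceIteration_iff hσt hab hq hΨ, hΦ]
    exact hT.fixedPoint_isFixedPt
  · have hΦ' := hT.fixedPoint_unique ((isFixedPt_sourceIteration_iff hσt hab hq hΨ').2 hfix')
    rw [IccExtend_of_mem hab Φ hx]
    exact DFunLike.congr_fun hΦ' ⟨x, hx⟩
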